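/- Let n ≥ 1 and ε ∈ {-1,1}^{2n+2}_+ with max ε^{-1}({-1}) = 2n. For k ∈ {1, 2}, let V^{(k)} := {1,…,2n+2} \ {2n, 2n+k} and ε^{(k)} := the restriction of ε to V^{(k)}. Then ε^{(k)} ∈ {-1,1}^{V^{(k)}}_+ for k = 1, 2, and 𝒫_{n+1}(ε) = (𝒫_n(ε^{(1)}) ⊎ {(2n, 2n+1)}) ∪ (𝒫_n(ε^{(2)}) ⊎ {(2n, 2n+2)}), where the two sets in this union are disjoint. -/
import Mathlib


/-- `θ` is a pair partition of the finite set `V`. -/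
def IsPP {α : Type*} [LinearOrder α] (V : Finset α) (θ : Finset (α × α)) : Prop :=
  (∀ p ∈ θ, p.1 < p.2) ∧
    θ.image Prod.fst ∪ θ.image Prod.snd = V ∧ V.card = 2 * θ.card

/-- `θ` is non-crossing. -/
def IsNC {α : Type*} [LinearOrder α] (θ : Finset (α × α)) : Prop :=
  ∀ p ∈ θ, ∀ q ∈ θ, p.1 < q.1 →
    ((p.1 < q.1 ∧ q.1 < p.2) ↔ (p.1 < q.2 ∧ q.2 < p.2))

/-- The depth of the pair `p` in `θ`. -/
def pairDepth {α : Type*} [LinearOrder α] (θ : Finset (α × α)) (p : α × α) : ℕ :=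
  (θ.filter fun q => q.1 < p.1 ∧ p.1 < p.2 ∧ p.2 < q.2).card

/-- `V^ε_{0,1}`: the set of endpoints of the pairs of depth `≤ 1` of the non-crossing
pair partition `θnc` (the counterpart of `ε`). -/
def V01 (θnc : Finset (ℕ × ℕ)) : Finset ℕ :=
  (θnc.filter fun p => pairDepth θnc p ≤ 1).image Prod.fst ∪
    (θnc.filter fun p => pairDepth θnc p ≤ 1).image Prod.snd

/-- `𝒫_n(ε)`: gluings of the set of pairs of `θnc` (the non-crossing counterpart of `ε`)
of depth `≥ 2` with an arbitrary element of `PP(V^ε_{0,1}, ε_{0,1})`. -/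
def PnSet (ε : ℕ → ℤ) (θnc : Finset (ℕ × ℕ)) : Set (Finset (ℕ × ℕ)) :=
  {θ | ∃ σ : Finset (ℕ × ℕ), IsPP (V01 θnc) σ ∧
    σ.image Prod.fst = (V01 θnc).filter (fun v => ε v = -1) ∧
    θ = (θnc.filter fun p => 2 ≤ pairDepth θnc p) ∪ σ}

namespace St19

variable {V : Finset ℕ} {θ : Finset (ℕ × ℕ)}

/-- structural facts of a pair partition -/
theorem pp_inj (h : IsPP V θ) :
    Set.InjOn Prod.fst (θ : Set (ℕ × ℕ)) ∧ Set.InjOn Prod.snd (θ : Set (ℕ × ℕ)) ∧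
      Disjoint (θ.image Prod.fst) (θ.image Prod.snd) := by
  obtain ⟨-, himg, hcard⟩ := h
  have h1 : (θ.image Prod.fst).card ≤ θ.card := Finset.card_image_le
  have h2 : (θ.image Prod.snd).card ≤ θ.card := Finset.card_image_le
  have h3 := Finset.card_union_add_card_inter (θ.image Prod.fst) (θ.image Prod.snd)
  rw [himg] at h3
  have hf : (θ.image Prod.fst).card = θ.card ∧ (θ.image Prod.snd).card = θ.card ∧
      (θ.image Prod.fst ∩ θ.image Prod.snd).card = 0 := by
    constructor
    · omega
    constructor
    · omega
    · omega
  refine ⟨Finset.card_image_iff.mp hf.1, Finset.card_image_iff.mp hf.2.1, ?_⟩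
  rw [Finset.disjoint_iff_inter_eq_empty, ← Finset.card_eq_zero]
  exact hf.2.2

end St19

namespace St19
variable {V : Finset ℕ} {θ : Finset (ℕ × ℕ)}

theorem mem_V_of_fst (h : IsPP V θ) {p : ℕ × ℕ} (hp : p ∈ θ) : p.1 ∈ V := by
  rw [← h.2.1]
  exact Finset.mem_union_left _ (Finset.mem_image_of_mem _ hp)

theorem mem_V_of_snd (h : IsPP V θ) {p : ℕ × ℕ} (hp : p ∈ θ) : p.2 ∈ V := by
  rw [← h.2.1]
  exact Finset.mem_union_right _ (Finset.mem_image_of_mem _ hp)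

/-- The maximal left point is paired with the next point of `V`. -/
theorem max_left_partner (h : IsPP V θ) (hnc : IsNC θ) {l r : ℕ}
    (hlr : (l, r) ∈ θ) (hmaxl : ∀ q ∈ θ, q.1 ≤ l) :
    ∀ v ∈ V, l < v → r ≤ v := by
  intro v hv hlv
  by_contra hc
  push_neg at hc
  -- v ∈ V, l < v < r
  have hv' : v ∈ θ.image Prod.fst ∪ θ.image Prod.snd := by rw [h.2.1]; exact hv
  obtain ⟨finj, sinj, hdisj⟩ := pp_inj h
  rcases Finset.mem_union.mp hv' with hvf | hvs
  · obtain ⟨q, hq, hq1⟩ := Finset.mem_image.mp hvf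
    exact absurd (hq1 ▸ hmaxl q hq) (by omega)
  · obtain ⟨q, hq, hq2⟩ := Finset.mem_image.mp hvs
    have hq1 : q.1 < l := by
      rcases lt_or_eq_of_le (hmaxl q hq) with h' | h'
      · exact h'
      · exfalso
        have : q = (l, r) := finj hq hlr h'
        rw [this] at hq2; simp at hq2; omega
    have := hnc q hq (l, r) hlr hq1
    simp only at this
    have hq12 := h.1 q hq
    omega

theorem pp_erase (h : IsPP V θ) {l r : ℕ} (hlr : (l, r) ∈ θ) :
    IsPP ((V.erase l).erase r) (θ.erase (l, r)) ∧
      (θ.erase (l, r)).image Prod.fst = (θ.image Prod.fst).erase l ∧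
      (θ.erase (l, r)).image Prod.snd = (θ.image Prod.snd).erase r := by
  obtain ⟨finj, sinj, hdisj⟩ := pp_inj h
  have hfst : (θ.erase (l, r)).image Prod.fst = (θ.image Prod.fst).erase l := by
    ext x
    simp only [Finset.mem_image, Finset.mem_erase]
    constructor
    · rintro ⟨q, ⟨hq0, hq⟩, rfl⟩
      refine ⟨fun hx => hq0 (finj hq hlr hx), q, hq, rfl⟩
    · rintro ⟨hx, q, hq, rfl⟩
      exact ⟨q, ⟨fun he => hx (by rw [he]), hq⟩, rfl⟩
  have hsnd : (θ.erase (l, r)).image Prod.snd = (θ.image Prod.snd).erase r := by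
    ext x
    simp only [Finset.mem_image, Finset.mem_erase]
    constructor
    · rintro ⟨q, ⟨hq0, hq⟩, rfl⟩
      refine ⟨fun hx => hq0 (sinj hq hlr hx), q, hq, rfl⟩
    · rintro ⟨hx, q, hq, rfl⟩
      exact ⟨q, ⟨fun he => hx (by rw [he]), hq⟩, rfl⟩
  have hlmem : l ∈ θ.image Prod.fst := Finset.mem_image_of_mem _ hlr
  have hrmem : r ∈ θ.image Prod.snd := Finset.mem_image_of_mem _ hlr
  have hlns : l ∉ θ.image Prod.snd := Finset.disjoint_left.mp hdisj hlmem
  have hrnf : r ∉ θ.image Prod.fst := Finset.disjoint_right.mp hdisj hrmem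
  have hne : l ≠ r := ne_of_lt (h.1 _ hlr)
  refine ⟨⟨fun p hp => h.1 p (Finset.mem_of_mem_erase hp), ?_, ?_⟩, hfst, hsnd⟩
  · rw [hfst, hsnd]
    ext x
    simp only [Finset.mem_union, Finset.mem_erase]
    constructor
    · rintro (⟨hx, hm⟩ | ⟨hx, hm⟩)
      · refine ⟨fun he => hrnf (he ▸ hm), hx, ?_⟩
        rw [← h.2.1]; exact Finset.mem_union_left _ hm
      · refine ⟨hx, fun he => hlns (he ▸ hm), ?_⟩
        rw [← h.2.1]; exact Finset.mem_union_right _ hm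
    · rintro ⟨hr', hl', hm⟩
      rw [← h.2.1] at hm
      rcases Finset.mem_union.mp hm with hm | hm
      · exact Or.inl ⟨hl', hm⟩
      · exact Or.inr ⟨hr', hm⟩
  · have h1 : r ∈ V.erase l :=
      Finset.mem_erase.mpr ⟨(Ne.symm hne), mem_V_of_snd h hlr⟩
    have h2 : l ∈ V := mem_V_of_fst h hlr
    rw [Finset.card_erase_of_mem h1, Finset.card_erase_of_mem h2,
      Finset.card_erase_of_mem hlr, h.2.2]
    have : 1 ≤ θ.card := Finset.card_pos.mpr ⟨_, hlr⟩
    omega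

end St19

namespace St19

theorem nc_subset {θ θ' : Finset (ℕ × ℕ)} (hs : θ' ⊆ θ) (h : IsNC θ) : IsNC θ' :=
  fun p hp q hq => h p (hs hp) q (hs hq)

/-- A non-crossing pair partition is determined by its set of left points. -/
theorem nc_unique : ∀ (m : ℕ) (V : Finset ℕ) (θ θ' : Finset (ℕ × ℕ)),
    θ.card = m → IsPP V θ → IsPP V θ' → IsNC θ → IsNC θ' →
    θ.image Prod.fst = θ'.image Prod.fst → θ = θ' := by
  intro m
  induction m using Nat.strong_induction_on with
  | _ m ih =>
    intro V θ θ' hm h h' hnc hnc' hf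
    rcases Nat.eq_zero_or_pos m with rfl | hpos
    · rw [Finset.card_eq_zero] at hm
      subst hm
      have hV : V.card = 0 := by rw [h.2.2]; simp
      have : θ'.card = 0 := by have := h'.2.2; omega
      rw [Finset.card_eq_zero] at this
      rw [this]
    · have hne : θ.Nonempty := Finset.card_pos.mp (by omega)
      have hLne : (θ.image Prod.fst).Nonempty := hne.image _
      obtain ⟨⟨a, r⟩, hp, hp1⟩ := Finset.mem_image.mp (Finset.max'_mem _ hLne)
      simp only at hp1
      have hlmem' : a ∈ θ'.image Prod.fst := by
        rw [← hf, hp1]; exact Finset.max'_mem _ hLne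
      obtain ⟨⟨a', r'⟩, hp', hp1'⟩ := Finset.mem_image.mp hlmem'
      simp only at hp1'
      subst hp1'
      have hmaxl : ∀ q ∈ θ, q.1 ≤ a' := fun q hq => by
        rw [hp1]; exact Finset.le_max' _ _ (Finset.mem_image_of_mem _ hq)
      have hmaxl' : ∀ q ∈ θ', q.1 ≤ a' := fun q hq => by
        have : q.1 ∈ θ.image Prod.fst := by
          rw [hf]; exact Finset.mem_image_of_mem _ hq
        rw [hp1]; exact Finset.le_max' _ _ this
      have hrr : r = r' := by
        have h1 := max_left_partner h hnc hp hmaxl r' (mem_V_of_snd h' hp')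
          (h'.1 _ hp')
        have h2 := max_left_partner h' hnc' hp' hmaxl' r (mem_V_of_snd h hp)
          (h.1 _ hp)
        omega
      subst hrr
      obtain ⟨he1, he2, he3⟩ := pp_erase h hp
      obtain ⟨he1', he2', he3'⟩ := pp_erase h' hp'
      have hcard : (θ.erase (a', r)).card = m - 1 := by
        rw [Finset.card_erase_of_mem hp, hm]
      have heq := ih (m - 1) (by omega) _ _ _ hcard he1 he1'
        (nc_subset (Finset.erase_subset _ _) hnc)
        (nc_subset (Finset.erase_subset _ _) hnc')
        (by rw [he2, he2', hf])
      calc θ = insert (a', r) (θ.erase (a', r)) := (Finset.insert_erase hp).symm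
        _ = insert (a', r) (θ'.erase (a', r)) := by rw [heq]
        _ = θ' := Finset.insert_erase hp'

end St19

namespace St19

theorem pp_insert {V : Finset ℕ} {θ : Finset (ℕ × ℕ)} {l r : ℕ}
    (h : IsPP V θ) (hl : l ∉ V) (hr : r ∉ V) (hlr : l < r) :
    IsPP (insert l (insert r V)) (insert (l, r) θ) := by
  have hlr' : l ≠ r := ne_of_lt hlr
  have hnm : (l, r) ∉ θ := fun hm => hl (mem_V_of_fst h hm)
  refine ⟨?_, ?_, ?_⟩
  · intro p hp
    rcases Finset.mem_insert.mp hp with rfl | hp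
    · exact hlr
    · exact h.1 p hp
  · rw [Finset.image_insert, Finset.image_insert]
    ext x
    simp only [Finset.mem_union, Finset.mem_insert]
    rw [← h.2.1]
    simp only [Finset.mem_union]
    tauto
  · rw [Finset.card_insert_of_notMem hnm,
      Finset.card_insert_of_notMem (by
        simp only [Finset.mem_insert]
        push_neg
        exact ⟨hlr', hl⟩),
      Finset.card_insert_of_notMem hr, h.2.2]
    ring

/-- decompose a filter over a set containing `a`. -/
theorem filter_mem_decomp {s : Finset (ℕ × ℕ)} {a : ℕ × ℕ} (ha : a ∈ s)
    (c : ℕ × ℕ → Prop) [DecidablePred c] :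
    s.filter c = if c a then insert a ((s.erase a).filter c)
      else (s.erase a).filter c := by
  conv_lhs => rw [← Finset.insert_erase ha]
  rw [Finset.filter_insert]

end St19

namespace St19

theorem key_pairs {n : ℕ} (hn : 1 ≤ n) {ε : ℕ → ℤ}
    (hval : ∀ v ∈ Finset.Icc 1 (2 * n + 2), ε v = 1 ∨ ε v = -1)
    (hneg : ε (2 * n) = -1)
    (hmax : ∀ v ∈ Finset.Icc 1 (2 * n + 2), ε v = -1 → v ≤ 2 * n)
    {θnc : Finset (ℕ × ℕ)} (hpp : IsPP (Finset.Icc 1 (2 * n + 2)) θnc)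
    (hleft : θnc.image Prod.fst =
      (Finset.Icc 1 (2 * n + 2)).filter fun v => ε v = -1)
    (hnc : IsNC θnc) :
    ∃ l0, (2 * n, 2 * n + 1) ∈ θnc ∧ (l0, 2 * n + 2) ∈ θnc ∧
      1 ≤ l0 ∧ l0 < 2 * n := by
  obtain ⟨finj, sinj, hdisj⟩ := pp_inj hpp
  have hIcc : ∀ x : ℕ, x ∈ Finset.Icc 1 (2 * n + 2) ↔ 1 ≤ x ∧ x ≤ 2 * n + 2 := by
    intro x; rw [Finset.mem_Icc]
  -- positive points are right points
  have hpos_right : ∀ x, 2 * n < x → x ≤ 2 * n + 2 → ∃ b, (b, x) ∈ θnc := by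
    intro x hx1 hx2
    have hxV : x ∈ Finset.Icc 1 (2 * n + 2) := (hIcc x).mpr ⟨by omega, hx2⟩
    have hxnf : x ∉ θnc.image Prod.fst := by
      rw [hleft, Finset.mem_filter]
      rintro ⟨-, hx⟩
      exact absurd (hmax x hxV hx) (by omega)
    have : x ∈ θnc.image Prod.fst ∪ θnc.image Prod.snd := by
      rw [hpp.2.1]; exact hxV
    rcases Finset.mem_union.mp this with h | h
    · exact absurd h hxnf
    · obtain ⟨q, hq, hq2⟩ := Finset.mem_image.mp h
      exact ⟨q.1, by rw [← hq2, Prod.mk.eta]; exact hq⟩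
  -- left points are ≤ 2n and ≥ 1
  have hleft_le : ∀ q ∈ θnc, 1 ≤ q.1 ∧ q.1 ≤ 2 * n := by
    intro q hq
    have : q.1 ∈ (Finset.Icc 1 (2 * n + 2)).filter fun v => ε v = -1 := by
      rw [← hleft]; exact Finset.mem_image_of_mem _ hq
    rw [Finset.mem_filter, hIcc] at this
    exact ⟨this.1.1, hmax _ ((hIcc _).mpr this.1) this.2⟩
  -- the pair containing 2n+1
  obtain ⟨b, hb⟩ := hpos_right (2 * n + 1) (by omega) (by omega)
  have hble : b ≤ 2 * n := (hleft_le _ hb).2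
  -- claim b = 2n
  have hb2n : b = 2 * n := by
    by_contra hbne
    have hblt : b < 2 * n := lt_of_le_of_ne hble hbne
    -- pair containing 2n as left point
    have h2nf : 2 * n ∈ θnc.image Prod.fst := by
      rw [hleft, Finset.mem_filter]
      exact ⟨(hIcc _).mpr ⟨by omega, by omega⟩, hneg⟩
    obtain ⟨q, hq, hq1⟩ := Finset.mem_image.mp h2nf
    have hq2 : q.2 ≤ 2 * n + 2 := by
      have := mem_V_of_snd hpp hq
      rw [hIcc] at this; exact this.2
    have hqlt : (2 : ℕ) * n < q.2 := hq1 ▸ hpp.1 q hq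
    have hq2ne : q.2 ≠ 2 * n + 1 := by
      intro he
      have : q = (b, 2 * n + 1) := sinj hq hb (by simpa using he)
      rw [this] at hq1; simp at hq1; omega
    have hq22 : q.2 = 2 * n + 2 := by omega
    -- apply noncrossing to (b, 2n+1) and q
    have := hnc (b, 2 * n + 1) hb q hq (by simp; omega)
    simp only at this
    omega
  subst hb2n
  -- the pair containing 2n+2
  obtain ⟨l0, hl0⟩ := hpos_right (2 * n + 2) (by omega) (by omega)
  have hl0le := hleft_le _ hl0
  simp only at hl0le
  have hl0ne : l0 ≠ 2 * n := by
    intro he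
    have : (l0, 2 * n + 2) = (2 * n, 2 * n + 1) := finj hl0 hb he
    simp at this
  exact ⟨l0, hb, hl0, hl0le.1, lt_of_le_of_ne hl0le.2 hl0ne⟩

end St19

namespace St19

theorem image_erase_of_injOn {s : Finset (ℕ × ℕ)} {f : ℕ × ℕ → ℕ}
    (hinj : Set.InjOn f s) {a : ℕ × ℕ} (ha : a ∈ s) :
    (s.erase a).image f = (s.image f).erase (f a) := by
  ext x
  simp only [Finset.mem_image, Finset.mem_erase]
  constructor
  · rintro ⟨q, ⟨hq0, hq⟩, rfl⟩
    exact ⟨fun hx => hq0 (hinj hq ha hx), q, hq, rfl⟩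
  · rintro ⟨hx, q, hq, rfl⟩
    exact ⟨q, ⟨fun he => hx (by rw [he]), hq⟩, rfl⟩

theorem nc2' {n l0 : ℕ} {θnc : Finset (ℕ × ℕ)} (hnc : IsNC θnc)
    (hlt : ∀ p ∈ θnc, p.1 < p.2)
    (hQ : (l0, 2 * n + 2) ∈ θnc)
    (hsmall : ∀ p ∈ θnc, p ≠ (2 * n, 2 * n + 1) → p ≠ (l0, 2 * n + 2) →
      p.2 < 2 * n) :
    IsNC (insert (l0, 2 * n + 1)
      ((θnc.erase (2 * n, 2 * n + 1)).erase (l0, 2 * n + 2))) := by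
  intro p hp q hq hpq
  rcases Finset.mem_insert.mp hp with rfl | hp <;>
    rcases Finset.mem_insert.mp hq with h' | hq'
  · rw [h'] at hpq; simp at hpq
  · obtain ⟨hqQ, hqm⟩ := Finset.mem_erase.mp hq'
    obtain ⟨hqP, hqm⟩ := Finset.mem_erase.mp hqm
    have h1 := hsmall q hqm hqP hqQ
    have h2 := hlt q hqm
    simp only at hpq ⊢
    omega
  · obtain ⟨hpQ, hpm⟩ := Finset.mem_erase.mp hp
    obtain ⟨hpP, hpm⟩ := Finset.mem_erase.mp hpm
    rw [h'] at hpq ⊢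
    have h1 := hsmall p hpm hpP hpQ
    have h2 := hlt p hpm
    have h3 := hnc p hpm _ hQ (by simpa using hpq)
    simp only at h3 hpq ⊢
    omega
  · obtain ⟨-, hpm⟩ := Finset.mem_erase.mp hp
    obtain ⟨-, hpm⟩ := Finset.mem_erase.mp hpm
    obtain ⟨-, hqm⟩ := Finset.mem_erase.mp hq'
    obtain ⟨-, hqm⟩ := Finset.mem_erase.mp hqm
    exact hnc p hpm q hqm hpq

end St19

namespace St19
theorem union_erase_erase {A B : Finset ℕ} {a b : ℕ}
    (haB : a ∉ B) (hbA : b ∉ A) :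
    A.erase a ∪ B.erase b = ((A ∪ B).erase a).erase b := by
  ext x
  simp only [Finset.mem_union, Finset.mem_erase]
  constructor
  · rintro (⟨hx, hA⟩ | ⟨hx, hB⟩)
    · exact ⟨fun he => hbA (he ▸ hA), hx, Or.inl hA⟩
    · exact ⟨hx, fun he => haB (he ▸ hB), Or.inr hB⟩
  · rintro ⟨hb', ha', hA | hB⟩
    · exact Or.inl ⟨ha', hA⟩
    · exact Or.inr ⟨hb', hB⟩
end St19

namespace St19
theorem part1 {n k : ℕ} (hn : 1 ≤ n) (hk1 : 1 ≤ k) (hk2 : k ≤ 2) {ε : ℕ → ℤ}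
    (hsum : ∑ v ∈ Finset.Icc 1 (2 * n + 2), ε v = 0)
    (htail : ∀ p ∈ Finset.Icc 1 (2 * n + 2),
      0 ≤ ∑ h ∈ Finset.Icc p (2 * n + 2), ε h)
    (hneg : ε (2 * n) = -1)
    (hepos : ∀ x, 2 * n < x → x ≤ 2 * n + 2 → ε x = 1) :
    ∑ v ∈ Finset.Icc 1 (2 * n + 2) \ {2 * n, 2 * n + k}, ε v = 0 ∧
      ∀ u ∈ Finset.Icc 1 (2 * n + 2) \ {2 * n, 2 * n + k},
        0 ≤ ∑ v ∈ (Finset.Icc 1 (2 * n + 2) \ {2 * n, 2 * n + k}).filter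
          (fun v => u ≤ v), ε v := by
  have hsub : ({2 * n, 2 * n + k} : Finset ℕ) ⊆ Finset.Icc 1 (2 * n + 2) := by
    intro x hx
    simp only [Finset.mem_insert, Finset.mem_singleton] at hx
    rw [Finset.mem_Icc]
    omega
  have hpair : ∑ v ∈ ({2 * n, 2 * n + k} : Finset ℕ), ε v = 0 := by
    rw [Finset.sum_pair (by omega : (2 * n : ℕ) ≠ 2 * n + k), hneg,
      hepos (2 * n + k) (by omega) (by omega)]
    ring
  constructor
  · rw [Finset.sum_sdiff_eq_sub hsub, hsum, hpair]
    ring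
  · intro u hu
    rw [Finset.mem_sdiff, Finset.mem_Icc] at hu
    obtain ⟨⟨hu1, hu2⟩, hu3⟩ := hu
    simp only [Finset.mem_insert, Finset.mem_singleton, not_or] at hu3
    by_cases hcase : u ≤ 2 * n
    · have hsub2 : ({2 * n, 2 * n + k} : Finset ℕ) ⊆ Finset.Icc u (2 * n + 2) := by
        intro x hx
        simp only [Finset.mem_insert, Finset.mem_singleton] at hx
        rw [Finset.mem_Icc]
        omega
      have hflt : (Finset.Icc 1 (2 * n + 2) \ {2 * n, 2 * n + k}).filter
          (fun v => u ≤ v) = Finset.Icc u (2 * n + 2) \ {2 * n, 2 * n + k} := by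
        ext x
        simp only [Finset.mem_filter, Finset.mem_sdiff, Finset.mem_Icc,
          Finset.mem_insert, Finset.mem_singleton, not_or]
        omega
      rw [hflt, Finset.sum_sdiff_eq_sub hsub2, hpair, sub_zero]
      exact htail u (Finset.mem_Icc.mpr ⟨hu1, by omega⟩)
    · have hflt : (Finset.Icc 1 (2 * n + 2) \ {2 * n, 2 * n + k}).filter
          (fun v => u ≤ v) = {u} := by
        ext x
        simp only [Finset.mem_filter, Finset.mem_sdiff, Finset.mem_Icc,
          Finset.mem_insert, Finset.mem_singleton, not_or]
        omega
      rw [hflt, Finset.sum_singleton, hepos u (by omega) (by omega)]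
      norm_num
end St19

namespace St19
theorem union_erase_singleton {D σ : Finset (ℕ × ℕ)} {p : ℕ × ℕ} (hp : p ∈ σ) :
    D ∪ σ = (D ∪ σ.erase p) ∪ {p} := by
  ext x
  simp only [Finset.mem_union, Finset.mem_erase, Finset.mem_singleton]
  by_cases hx : x = p
  · subst hx
    simp [hp]
  · tauto

theorem union_union_singleton {D τ : Finset (ℕ × ℕ)} (p : ℕ × ℕ) :
    (D ∪ τ) ∪ {p} = D ∪ insert p τ := by
  ext x
  simp only [Finset.mem_union, Finset.mem_insert, Finset.mem_singleton]
  tauto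
end St19

open St19
/-- Let `n ≥ 1` and `ε ∈ {-1,1}^{2n+2}_+` with `max ε⁻¹({-1}) = 2n`.  For `k ∈ {1,2}`
let `ε⁽ᵏ⁾` be the restriction of `ε` to `V⁽ᵏ⁾ := {1,…,2n+2} \ {2n, 2n+k}`, with
non-crossing counterparts `θnc1`, `θnc2` (and `θnc` that of `ε`).  Then each `ε⁽ᵏ⁾` is
in `{-1,1}^{V⁽ᵏ⁾}_+`, and `𝒫_{n+1}(ε)` is the disjoint union of
`𝒫_n(ε⁽¹⁾) ⊎ {(2n, 2n+1)}` and `𝒫_n(ε⁽²⁾) ⊎ {(2n, 2n+2)}`. -/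
theorem stmt19 (n : ℕ) (hn : 1 ≤ n) (ε : ℕ → ℤ)
    (hval : ∀ v ∈ Finset.Icc 1 (2 * n + 2), ε v = 1 ∨ ε v = -1)
    (hsum : ∑ v ∈ Finset.Icc 1 (2 * n + 2), ε v = 0)
    (htail : ∀ p ∈ Finset.Icc 1 (2 * n + 2),
      0 ≤ ∑ h ∈ Finset.Icc p (2 * n + 2), ε h)
    (hneg : ε (2 * n) = -1)
    (hmax : ∀ v ∈ Finset.Icc 1 (2 * n + 2), ε v = -1 → v ≤ 2 * n)
    (θnc : Finset (ℕ × ℕ))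
    (hpp : IsPP (Finset.Icc 1 (2 * n + 2)) θnc)
    (hleft : θnc.image Prod.fst =
      (Finset.Icc 1 (2 * n + 2)).filter fun v => ε v = -1)
    (hnc : IsNC θnc)
    (θnc1 : Finset (ℕ × ℕ))
    (hpp1 : IsPP (Finset.Icc 1 (2 * n + 2) \ {2 * n, 2 * n + 1}) θnc1)
    (hleft1 : θnc1.image Prod.fst =
      (Finset.Icc 1 (2 * n + 2) \ {2 * n, 2 * n + 1}).filter fun v => ε v = -1)
    (hnc1 : IsNC θnc1)
    (θnc2 : Finset (ℕ × ℕ))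
    (hpp2 : IsPP (Finset.Icc 1 (2 * n + 2) \ {2 * n, 2 * n + 2}) θnc2)
    (hleft2 : θnc2.image Prod.fst =
      (Finset.Icc 1 (2 * n + 2) \ {2 * n, 2 * n + 2}).filter fun v => ε v = -1)
    (hnc2 : IsNC θnc2) :
    (∀ k ∈ ({1, 2} : Finset ℕ),
      (∑ v ∈ Finset.Icc 1 (2 * n + 2) \ {2 * n, 2 * n + k}, ε v = 0 ∧
        ∀ u ∈ Finset.Icc 1 (2 * n + 2) \ {2 * n, 2 * n + k},
          0 ≤ ∑ v ∈ (Finset.Icc 1 (2 * n + 2) \ {2 * n, 2 * n + k}).filter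
            (fun v => u ≤ v), ε v)) ∧
    (PnSet ε θnc =
      {θ | ∃ σ ∈ PnSet ε θnc1, θ = σ ∪ {(2 * n, 2 * n + 1)}} ∪
        {θ | ∃ σ ∈ PnSet ε θnc2, θ = σ ∪ {(2 * n, 2 * n + 2)}}) ∧
    Disjoint {θ : Finset (ℕ × ℕ) | ∃ σ ∈ PnSet ε θnc1, θ = σ ∪ {(2 * n, 2 * n + 1)}}
      {θ : Finset (ℕ × ℕ) | ∃ σ ∈ PnSet ε θnc2, θ = σ ∪ {(2 * n, 2 * n + 2)}} := by
  obtain ⟨l0, hP, hQ, hl01, hl0n⟩ := key_pairs hn hval hneg hmax hpp hleft hnc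
  obtain ⟨finj, sinj, hdisj⟩ := pp_inj hpp
  have hlt := hpp.1
  have hepos : ∀ x, 2 * n < x → x ≤ 2 * n + 2 → ε x = 1 := by
    intro x h1 h2
    have hx : x ∈ Finset.Icc 1 (2 * n + 2) := Finset.mem_Icc.mpr ⟨by omega, h2⟩
    rcases hval x hx with h | h
    · exact h
    · exact absurd (hmax x hx h) (by omega)
  have hmemIcc : ∀ q ∈ θnc, (1 ≤ q.1 ∧ q.1 ≤ 2 * n + 2) ∧
      (1 ≤ q.2 ∧ q.2 ≤ 2 * n + 2) := by
    intro q hq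
    have h1 := mem_V_of_fst hpp hq
    have h2 := mem_V_of_snd hpp hq
    rw [Finset.mem_Icc] at h1 h2
    exact ⟨h1, h2⟩
  have hsmall : ∀ p ∈ θnc, p ≠ (2 * n, 2 * n + 1) → p ≠ (l0, 2 * n + 2) →
      p.2 < 2 * n := by
    intro p hp hp1 hp2
    have hb := (hmemIcc p hp).2.2
    have hn1 : p.2 ≠ 2 * n + 1 := fun he => hp1 (sinj hp hP (by simpa using he))
    have hn2 : p.2 ≠ 2 * n + 2 := fun he => hp2 (sinj hp hQ (by simpa using he))
    have hn0 : p.2 ≠ 2 * n := by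
      intro he
      have h2f : (2 : ℕ) * n ∈ θnc.image Prod.fst := Finset.mem_image_of_mem _ hP
      have h2s : p.2 ∈ θnc.image Prod.snd := Finset.mem_image_of_mem _ hp
      rw [he] at h2s
      exact Finset.disjoint_left.mp hdisj h2f h2s
    omega
  have hCnotin : (l0, 2 * n + 1) ∉ θnc := by
    intro hm
    have : (l0, 2 * n + 1) = (2 * n, 2 * n + 1) := sinj hm hP rfl
    simp at this
    omega
  have he1pos : ε (2 * n + 1) = 1 := hepos _ (by omega) (by omega)
  have he2pos : ε (2 * n + 2) = 1 := hepos _ (by omega) (by omega)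
  obtain ⟨hppE, hfstE, hsndE⟩ := pp_erase hpp hP
  have hVeq : Finset.Icc 1 (2 * n + 2) \ {2 * n, 2 * n + 1}
      = ((Finset.Icc 1 (2 * n + 2)).erase (2 * n)).erase (2 * n + 1) := by
    ext x
    simp only [Finset.mem_sdiff, Finset.mem_insert, Finset.mem_erase,
      Finset.mem_Icc, Finset.mem_singleton, not_or]
    tauto
  have hE1 : θnc1 = θnc.erase (2 * n, 2 * n + 1) := by
    have hppE' : IsPP (Finset.Icc 1 (2 * n + 2) \ {2 * n, 2 * n + 1})
        (θnc.erase (2 * n, 2 * n + 1)) := by rw [hVeq]; exact hppE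
    have himg : (θnc.erase (2 * n, 2 * n + 1)).image Prod.fst
        = (Finset.Icc 1 (2 * n + 2) \ {2 * n, 2 * n + 1}).filter
          (fun v => ε v = -1) := by
      rw [hfstE, hleft]
      ext x
      simp only [Finset.mem_erase, Finset.mem_filter, Finset.mem_sdiff,
        Finset.mem_Icc, Finset.mem_insert, Finset.mem_singleton, not_or]
      constructor
      · rintro ⟨hx0, ⟨hx1, hx2⟩, hx3⟩
        refine ⟨⟨⟨hx1, hx2⟩, hx0, ?_⟩, hx3⟩
        intro he
        rw [he, he1pos] at hx3
        exact absurd hx3 (by norm_num)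
      · rintro ⟨⟨⟨hx1, hx2⟩, hx4, hx5⟩, hx3⟩
        exact ⟨hx4, ⟨hx1, hx2⟩, hx3⟩
    exact nc_unique θnc1.card _ θnc1 _ rfl hpp1 hppE' hnc1
      (nc_subset (Finset.erase_subset _ _) hnc) (by rw [hleft1, himg])
  have hQ' : (l0, 2 * n + 2) ∈ θnc.erase (2 * n, 2 * n + 1) :=
    Finset.mem_erase.mpr ⟨by simp, hQ⟩
  obtain ⟨hppE2, hfstE2, hsndE2⟩ := pp_erase hppE hQ'
  have hE2 : θnc2 = insert (l0, 2 * n + 1)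
      ((θnc.erase (2 * n, 2 * n + 1)).erase (l0, 2 * n + 2)) := by
    have hl0W : l0 ∉ ((((Finset.Icc 1 (2 * n + 2)).erase (2 * n)).erase
        (2 * n + 1)).erase l0).erase (2 * n + 2) := by
      simp only [Finset.mem_erase, not_and]
      intro h1 h2; omega
    have h1W : 2 * n + 1 ∉ ((((Finset.Icc 1 (2 * n + 2)).erase (2 * n)).erase
        (2 * n + 1)).erase l0).erase (2 * n + 2) := by
      simp only [Finset.mem_erase, not_and]
      intro h1 h2; omega
    have hppI := pp_insert hppE2 hl0W h1W (by omega)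
    have hVeq2 : Finset.Icc 1 (2 * n + 2) \ {2 * n, 2 * n + 2}
        = insert l0 (insert (2 * n + 1)
          (((((Finset.Icc 1 (2 * n + 2)).erase (2 * n)).erase
            (2 * n + 1)).erase l0).erase (2 * n + 2))) := by
      ext x
      simp only [Finset.mem_sdiff, Finset.mem_insert, Finset.mem_erase,
        Finset.mem_Icc, Finset.mem_singleton, not_or]
      omega
    have hppI' : IsPP (Finset.Icc 1 (2 * n + 2) \ {2 * n, 2 * n + 2})
        (insert (l0, 2 * n + 1)
          ((θnc.erase (2 * n, 2 * n + 1)).erase (l0, 2 * n + 2))) := by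
      rw [hVeq2]; exact hppI
    have himg2 : (insert (l0, 2 * n + 1)
        ((θnc.erase (2 * n, 2 * n + 1)).erase (l0, 2 * n + 2))).image Prod.fst
        = (Finset.Icc 1 (2 * n + 2) \ {2 * n, 2 * n + 2}).filter
          (fun v => ε v = -1) := by
      rw [Finset.image_insert]
      simp only
      rw [hfstE2, hfstE]
      have hins : insert l0 (((Finset.image Prod.fst θnc).erase (2 * n)).erase l0)
          = (Finset.image Prod.fst θnc).erase (2 * n) :=
        Finset.insert_erase (Finset.mem_erase.mpr
          ⟨by omega, Finset.mem_image_of_mem _ hQ⟩)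
      rw [hins, hleft]
      ext x
      simp only [Finset.mem_erase, Finset.mem_filter, Finset.mem_sdiff,
        Finset.mem_Icc, Finset.mem_insert, Finset.mem_singleton, not_or]
      constructor
      · rintro ⟨hx0, ⟨hx1, hx2⟩, hx3⟩
        refine ⟨⟨⟨hx1, hx2⟩, hx0, ?_⟩, hx3⟩
        intro he
        rw [he, he2pos] at hx3
        exact absurd hx3 (by norm_num)
      · rintro ⟨⟨⟨hx1, hx2⟩, hx4, hx5⟩, hx3⟩
        exact ⟨hx4, ⟨hx1, hx2⟩, hx3⟩
    exact nc_unique θnc2.card _ θnc2 _ rfl hpp2 hppI' hnc2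
      (nc2' hnc hlt hQ hsmall) (by rw [hleft2, himg2])
  have hd1 : ∀ p, pairDepth (θnc.erase (2 * n, 2 * n + 1)) p
      = pairDepth θnc p := by
    intro p
    unfold pairDepth
    rw [Finset.filter_erase, Finset.erase_eq_of_notMem]
    rw [Finset.mem_filter]
    simp only [not_and]
    intro _ h
    omega
  have hdP : pairDepth θnc (2 * n, 2 * n + 1) = 1 := by
    unfold pairDepth
    have : θnc.filter (fun q => q.1 < (2 * n, 2 * n + 1).1 ∧
        (2 * n, 2 * n + 1).1 < (2 * n, 2 * n + 1).2 ∧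
        (2 * n, 2 * n + 1).2 < q.2) = {(l0, 2 * n + 2)} := by
      ext q
      simp only [Finset.mem_filter, Finset.mem_singleton]
      constructor
      · rintro ⟨hq, h1, -, h3⟩
        have hb := (hmemIcc q hq).2.2
        have : q.2 = 2 * n + 2 := by omega
        exact sinj hq hQ (by simpa using this)
      · rintro rfl
        exact ⟨hQ, by simp; omega⟩
    rw [this, Finset.card_singleton]
  have hdQ : pairDepth θnc (l0, 2 * n + 2) = 0 := by
    unfold pairDepth
    rw [Finset.card_eq_zero, Finset.filter_eq_empty_iff]
    intro q hq
    have hb := (hmemIcc q hq).2.2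
    simp only [not_and]
    intro _ _
    omega
  have hd2C : pairDepth θnc2 (l0, 2 * n + 1) = 0 := by
    unfold pairDepth
    rw [Finset.card_eq_zero, Finset.filter_eq_empty_iff]
    intro q hq
    rw [hE2] at hq
    simp only [not_and]
    intro _ _
    rcases Finset.mem_insert.mp hq with rfl | hq'
    · simp
    · obtain ⟨hqQ, hq'⟩ := Finset.mem_erase.mp hq'
      obtain ⟨hqP, hq'⟩ := Finset.mem_erase.mp hq'
      have := hsmall q hq' hqP hqQ
      omega
  have hd2 : ∀ p ∈ (θnc.erase (2 * n, 2 * n + 1)).erase (l0, 2 * n + 2),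
      pairDepth θnc2 p = pairDepth θnc p := by
    intro p hp
    obtain ⟨hpQ, hp'⟩ := Finset.mem_erase.mp hp
    obtain ⟨hpP, hpm⟩ := Finset.mem_erase.mp hp'
    have hps := hsmall p hpm hpP hpQ
    have hplt := hlt p hpm
    unfold pairDepth
    rw [hE2, Finset.filter_insert]
    have hcQC : ((l0, 2 * n + 1).1 < p.1 ∧ p.1 < p.2 ∧ p.2 < (l0, 2 * n + 1).2)
        ↔ ((l0, 2 * n + 2).1 < p.1 ∧ p.1 < p.2 ∧ p.2 < (l0, 2 * n + 2).2) := by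
      simp only
      omega
    have hbase : θnc.filter (fun q => q.1 < p.1 ∧ p.1 < p.2 ∧ p.2 < q.2)
        = if ((l0, 2 * n + 2).1 < p.1 ∧ p.1 < p.2 ∧ p.2 < (l0, 2 * n + 2).2)
          then insert (l0, 2 * n + 2)
            (((θnc.erase (2 * n, 2 * n + 1)).erase (l0, 2 * n + 2)).filter
              (fun q => q.1 < p.1 ∧ p.1 < p.2 ∧ p.2 < q.2))
          else ((θnc.erase (2 * n, 2 * n + 1)).erase (l0, 2 * n + 2)).filter
              (fun q => q.1 < p.1 ∧ p.1 < p.2 ∧ p.2 < q.2) := by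
      have h1 : θnc.filter (fun q => q.1 < p.1 ∧ p.1 < p.2 ∧ p.2 < q.2)
          = (θnc.erase (2 * n, 2 * n + 1)).filter
            (fun q => q.1 < p.1 ∧ p.1 < p.2 ∧ p.2 < q.2) := by
        rw [Finset.filter_erase, Finset.erase_eq_of_notMem]
        rw [Finset.mem_filter]
        simp only [not_and]
        intro _ _
        omega
      rw [h1, filter_mem_decomp hQ' _]
    rw [hbase]
    by_cases hc : ((l0, 2 * n + 2).1 < p.1 ∧ p.1 < p.2 ∧ p.2 < (l0, 2 * n + 2).2)
    · rw [if_pos (hcQC.mpr hc), if_pos hc]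
      rw [Finset.card_insert_of_notMem, Finset.card_insert_of_notMem]
      · intro hm
        exact (Finset.notMem_erase _ _) (Finset.mem_of_mem_filter _ hm)
      · intro hm
        have := Finset.mem_of_mem_filter _ hm
        have := Finset.mem_of_mem_erase (Finset.mem_of_mem_erase this)
        exact hCnotin this
    · rw [if_neg (fun h => hc (hcQC.mp h)), if_neg hc]
  have hF1 : θnc1.filter (fun p => pairDepth θnc1 p ≤ 1)
      = (θnc.filter (fun p => pairDepth θnc p ≤ 1)).erase (2 * n, 2 * n + 1) := by
    calc θnc1.filter (fun p => pairDepth θnc1 p ≤ 1)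
        = (θnc.erase (2 * n, 2 * n + 1)).filter
            (fun p => pairDepth (θnc.erase (2 * n, 2 * n + 1)) p ≤ 1) := by
          rw [hE1]
      _ = (θnc.erase (2 * n, 2 * n + 1)).filter
            (fun p => pairDepth θnc p ≤ 1) :=
          Finset.filter_congr (fun x _ => by rw [hd1])
      _ = (θnc.filter (fun p => pairDepth θnc p ≤ 1)).erase (2 * n, 2 * n + 1) := by
          rw [Finset.filter_erase]
  have hF2 : θnc2.filter (fun p => pairDepth θnc2 p ≤ 1)
      = insert (l0, 2 * n + 1)
        (((θnc.filter (fun p => pairDepth θnc p ≤ 1)).erase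
          (2 * n, 2 * n + 1)).erase (l0, 2 * n + 2)) := by
    calc θnc2.filter (fun p => pairDepth θnc2 p ≤ 1)
        = (insert (l0, 2 * n + 1)
            ((θnc.erase (2 * n, 2 * n + 1)).erase (l0, 2 * n + 2))).filter
            (fun p => pairDepth θnc2 p ≤ 1) := by
          rw [← hE2]
      _ = insert (l0, 2 * n + 1)
            (((θnc.erase (2 * n, 2 * n + 1)).erase (l0, 2 * n + 2)).filter
              (fun p => pairDepth θnc2 p ≤ 1)) := by
          rw [Finset.filter_insert, if_pos (by rw [hd2C]; omega)]
      _ = insert (l0, 2 * n + 1)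
            (((θnc.erase (2 * n, 2 * n + 1)).erase (l0, 2 * n + 2)).filter
              (fun p => pairDepth θnc p ≤ 1)) := by
          rw [Finset.filter_congr (fun x hx => by rw [hd2 x hx])]
      _ = _ := by rw [Finset.filter_erase, Finset.filter_erase]
  have hD1 : θnc1.filter (fun p => 2 ≤ pairDepth θnc1 p)
      = θnc.filter (fun p => 2 ≤ pairDepth θnc p) := by
    calc θnc1.filter (fun p => 2 ≤ pairDepth θnc1 p)
        = (θnc.erase (2 * n, 2 * n + 1)).filter
            (fun p => 2 ≤ pairDepth (θnc.erase (2 * n, 2 * n + 1)) p) := by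
          rw [hE1]
      _ = (θnc.erase (2 * n, 2 * n + 1)).filter
            (fun p => 2 ≤ pairDepth θnc p) :=
          Finset.filter_congr (fun x _ => by rw [hd1])
      _ = (θnc.filter (fun p => 2 ≤ pairDepth θnc p)).erase (2 * n, 2 * n + 1) := by
          rw [Finset.filter_erase]
      _ = θnc.filter (fun p => 2 ≤ pairDepth θnc p) := by
          apply Finset.erase_eq_of_notMem
          rw [Finset.mem_filter, hdP]
          simp
  have hD2 : θnc2.filter (fun p => 2 ≤ pairDepth θnc2 p)
      = θnc.filter (fun p => 2 ≤ pairDepth θnc p) := by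
    calc θnc2.filter (fun p => 2 ≤ pairDepth θnc2 p)
        = (insert (l0, 2 * n + 1)
            ((θnc.erase (2 * n, 2 * n + 1)).erase (l0, 2 * n + 2))).filter
            (fun p => 2 ≤ pairDepth θnc2 p) := by
          rw [← hE2]
      _ = ((θnc.erase (2 * n, 2 * n + 1)).erase (l0, 2 * n + 2)).filter
            (fun p => 2 ≤ pairDepth θnc2 p) := by
          rw [Finset.filter_insert, if_neg (by rw [hd2C]; omega)]
      _ = ((θnc.erase (2 * n, 2 * n + 1)).erase (l0, 2 * n + 2)).filter
            (fun p => 2 ≤ pairDepth θnc p) :=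
          Finset.filter_congr (fun x hx => by rw [hd2 x hx])
      _ = ((θnc.filter (fun p => 2 ≤ pairDepth θnc p)).erase
            (2 * n, 2 * n + 1)).erase (l0, 2 * n + 2) := by
          rw [Finset.filter_erase, Finset.filter_erase]
      _ = (θnc.filter (fun p => 2 ≤ pairDepth θnc p)).erase (2 * n, 2 * n + 1) := by
          apply Finset.erase_eq_of_notMem
          rw [Finset.mem_erase]
          simp only [not_and]
          intro _
          rw [Finset.mem_filter, hdQ]
          simp
      _ = θnc.filter (fun p => 2 ≤ pairDepth θnc p) := by
          apply Finset.erase_eq_of_notMem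
          rw [Finset.mem_filter, hdP]
          simp
  have hPF : (2 * n, 2 * n + 1) ∈ θnc.filter (fun p => pairDepth θnc p ≤ 1) :=
    Finset.mem_filter.mpr ⟨hP, by rw [hdP]⟩
  have hQF : (l0, 2 * n + 2) ∈ θnc.filter (fun p => pairDepth θnc p ≤ 1) :=
    Finset.mem_filter.mpr ⟨hQ, by rw [hdQ]; omega⟩
  have hFsub : (θnc.filter (fun p => pairDepth θnc p ≤ 1) : Set (ℕ × ℕ))
      ⊆ (θnc : Set (ℕ × ℕ)) := by
    intro x hx
    exact Finset.mem_of_mem_filter _ hx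
  have finjF := finj.mono hFsub
  have sinjF := sinj.mono hFsub
  have hAsub : (θnc.filter (fun p => pairDepth θnc p ≤ 1)).image Prod.fst
      ⊆ θnc.image Prod.fst := Finset.image_subset_image (Finset.filter_subset _ _)
  have hBsub : (θnc.filter (fun p => pairDepth θnc p ≤ 1)).image Prod.snd
      ⊆ θnc.image Prod.snd := Finset.image_subset_image (Finset.filter_subset _ _)
  have h2nB : 2 * n ∉ (θnc.filter (fun p => pairDepth θnc p ≤ 1)).image Prod.snd :=
    fun hm => Finset.disjoint_left.mp hdisj
      (Finset.mem_image_of_mem _ hP) (hBsub hm)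
  have h1A : 2 * n + 1 ∉ (θnc.filter (fun p => pairDepth θnc p ≤ 1)).image
      Prod.fst := by
    intro hm
    have := hAsub hm
    rw [hleft, Finset.mem_filter] at this
    rw [he1pos] at this
    exact absurd this.2 (by norm_num)
  have h2A : 2 * n + 2 ∉ (θnc.filter (fun p => pairDepth θnc p ≤ 1)).image
      Prod.fst := by
    intro hm
    have := hAsub hm
    rw [hleft, Finset.mem_filter] at this
    rw [he2pos] at this
    exact absurd this.2 (by norm_num)
  have hW1 : V01 θnc1 = ((V01 θnc).erase (2 * n)).erase (2 * n + 1) := by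
    unfold V01
    rw [hF1, image_erase_of_injOn finjF hPF, image_erase_of_injOn sinjF hPF]
    dsimp only
    exact union_erase_erase h2nB h1A
  have hW2 : V01 θnc2 = ((V01 θnc).erase (2 * n)).erase (2 * n + 2) := by
    unfold V01
    rw [hF2, Finset.image_insert, Finset.image_insert]
    dsimp only
    have hQF' : (l0, 2 * n + 2) ∈ (θnc.filter
        (fun p => pairDepth θnc p ≤ 1)).erase (2 * n, 2 * n + 1) :=
      Finset.mem_erase.mpr ⟨by simp, hQF⟩
    have hesub : ((θnc.filter (fun p => pairDepth θnc p ≤ 1)).erase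
        (2 * n, 2 * n + 1) : Set (ℕ × ℕ))
        ⊆ (θnc.filter (fun p => pairDepth θnc p ≤ 1) : Set (ℕ × ℕ)) := by
      intro x hx
      exact Finset.mem_of_mem_erase hx
    rw [image_erase_of_injOn (finjF.mono hesub) hQF',
      image_erase_of_injOn (sinjF.mono hesub) hQF',
      image_erase_of_injOn finjF hPF, image_erase_of_injOn sinjF hPF]
    dsimp only
    have hl0in : l0 ∈ ((θnc.filter (fun p => pairDepth θnc p ≤ 1)).image
        Prod.fst).erase (2 * n) :=
      Finset.mem_erase.mpr ⟨by omega, Finset.mem_image_of_mem _ hQF⟩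
    rw [Finset.insert_erase hl0in, Finset.erase_right_comm]
    have h1in : 2 * n + 1 ∈ ((θnc.filter (fun p => pairDepth θnc p ≤ 1)).image
        Prod.snd).erase (2 * n + 2) :=
      Finset.mem_erase.mpr ⟨by omega, Finset.mem_image_of_mem _ hPF⟩
    rw [Finset.insert_erase h1in]
    exact union_erase_erase h2nB h2A
  have h2nW : 2 * n ∈ V01 θnc :=
    Finset.mem_union_left _ (Finset.mem_image_of_mem _ hPF)
  have h1W : 2 * n + 1 ∈ V01 θnc :=
    Finset.mem_union_right _ (Finset.mem_image_of_mem _ hPF)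
  have h2W : 2 * n + 2 ∈ V01 θnc :=
    Finset.mem_union_right _ (Finset.mem_image_of_mem _ hQF)
  have hWIcc : V01 θnc ⊆ Finset.Icc 1 (2 * n + 2) := by
    unfold V01
    rw [← hpp.2.1]
    exact Finset.union_subset_union hAsub hBsub
  refine ⟨?_, ?_, ?_⟩
  · intro k hk
    simp only [Finset.mem_insert, Finset.mem_singleton] at hk
    exact part1 hn (by omega) (by omega) hsum htail hneg hepos
  · apply Set.eq_of_subset_of_subset
    · -- forward inclusion
      rintro θ ⟨σ, hσpp, hσfst, rfl⟩
      have h2nσ : (2 * n : ℕ) ∈ σ.image Prod.fst := by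
        rw [hσfst, Finset.mem_filter]
        exact ⟨h2nW, hneg⟩
      obtain ⟨p, hp, hp1⟩ := Finset.mem_image.mp h2nσ
      have hp' : (2 * n, p.2) ∈ σ := by
        rw [← hp1, Prod.mk.eta]
        exact hp
      have hr1 : 2 * n < p.2 := by
        have := hσpp.1 _ hp'
        simpa using this
      have hr2 : p.2 ≤ 2 * n + 2 := by
        have := hWIcc (mem_V_of_snd hσpp hp')
        rw [Finset.mem_Icc] at this
        simpa using this.2
      have hrcase : p.2 = 2 * n + 1 ∨ p.2 = 2 * n + 2 := by omega
      rcases hrcase with hr | hr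
      · rw [hr] at hp'
        obtain ⟨hppe, hfste, -⟩ := pp_erase hσpp hp'
        left
        refine ⟨(θnc1.filter (fun p => 2 ≤ pairDepth θnc1 p))
          ∪ σ.erase (2 * n, 2 * n + 1),
          ⟨σ.erase (2 * n, 2 * n + 1), ?_, ?_, rfl⟩, ?_⟩
        · rw [hW1]
          exact hppe
        · rw [hfste, hσfst, hW1]
          ext x
          simp only [Finset.mem_erase, Finset.mem_filter]
          constructor
          · rintro ⟨hx0, hxW, hx3⟩
            refine ⟨⟨?_, hx0, hxW⟩, hx3⟩
            intro he
            rw [he, he1pos] at hx3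
            exact absurd hx3 (by norm_num)
          · rintro ⟨⟨hx1, hx0, hxW⟩, hx3⟩
            exact ⟨hx0, hxW, hx3⟩
        · rw [hD1]
          exact union_erase_singleton hp'

      · rw [hr] at hp'
        obtain ⟨hppe, hfste, -⟩ := pp_erase hσpp hp'
        right
        refine ⟨(θnc2.filter (fun p => 2 ≤ pairDepth θnc2 p))
          ∪ σ.erase (2 * n, 2 * n + 2),
          ⟨σ.erase (2 * n, 2 * n + 2), ?_, ?_, rfl⟩, ?_⟩
        · rw [hW2]
          exact hppe
        · rw [hfste, hσfst, hW2]
          ext x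
          simp only [Finset.mem_erase, Finset.mem_filter]
          constructor
          · rintro ⟨hx0, hxW, hx3⟩
            refine ⟨⟨?_, hx0, hxW⟩, hx3⟩
            intro he
            rw [he, he2pos] at hx3
            exact absurd hx3 (by norm_num)
          · rintro ⟨⟨hx1, hx0, hxW⟩, hx3⟩
            exact ⟨hx0, hxW, hx3⟩
        · rw [hD2]
          exact union_erase_singleton hp'

    · -- backward inclusion
      rintro θ (⟨σ, ⟨τ, hτpp, hτfst, rfl⟩, rfl⟩ | ⟨σ, ⟨τ, hτpp, hτfst, rfl⟩, rfl⟩)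
      · have h2nτ : (2 * n : ℕ) ∉ V01 θnc1 := by
          rw [hW1]
          intro hm
          exact (Finset.notMem_erase _ _) (Finset.mem_of_mem_erase hm)
        have h1τ : (2 * n + 1 : ℕ) ∉ V01 θnc1 := by
          rw [hW1]
          exact Finset.notMem_erase _ _
        have hppI := pp_insert hτpp h2nτ h1τ (by omega)
        have hVins : insert (2 * n) (insert (2 * n + 1) (V01 θnc1))
            = V01 θnc := by
          rw [hW1, Finset.insert_erase (Finset.mem_erase.mpr ⟨by omega, h1W⟩),
            Finset.insert_erase h2nW]
        refine ⟨insert (2 * n, 2 * n + 1) τ, ?_, ?_, ?_⟩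
        · rw [← hVins]
          exact hppI
        · rw [Finset.image_insert]
          dsimp only
          rw [hτfst]
          ext x
          simp only [Finset.mem_insert, Finset.mem_filter, hW1,
            Finset.mem_erase]
          constructor
          · rintro (rfl | ⟨⟨hx1, hx0, hxW⟩, hx3⟩)
            · exact ⟨h2nW, hneg⟩
            · exact ⟨hxW, hx3⟩
          · rintro ⟨hxW, hx3⟩
            by_cases hx : x = 2 * n
            · exact Or.inl hx
            · refine Or.inr ⟨⟨?_, hx, hxW⟩, hx3⟩
              intro he
              rw [he, he1pos] at hx3
              exact absurd hx3 (by norm_num)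
        · rw [hD1]
          exact union_union_singleton _
      · have h2nτ : (2 * n : ℕ) ∉ V01 θnc2 := by
          rw [hW2]
          intro hm
          exact (Finset.notMem_erase _ _) (Finset.mem_of_mem_erase hm)
        have h2τ : (2 * n + 2 : ℕ) ∉ V01 θnc2 := by
          rw [hW2]
          exact Finset.notMem_erase _ _
        have hppI := pp_insert hτpp h2nτ h2τ (by omega)
        have hVins : insert (2 * n) (insert (2 * n + 2) (V01 θnc2))
            = V01 θnc := by
          rw [hW2, Finset.insert_erase (Finset.mem_erase.mpr ⟨by omega, h2W⟩),
            Finset.insert_erase h2nW]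
        refine ⟨insert (2 * n, 2 * n + 2) τ, ?_, ?_, ?_⟩
        · rw [← hVins]
          exact hppI
        · rw [Finset.image_insert]
          dsimp only
          rw [hτfst]
          ext x
          simp only [Finset.mem_insert, Finset.mem_filter, hW2,
            Finset.mem_erase]
          constructor
          · rintro (rfl | ⟨⟨hx1, hx0, hxW⟩, hx3⟩)
            · exact ⟨h2nW, hneg⟩
            · exact ⟨hxW, hx3⟩
          · rintro ⟨hxW, hx3⟩
            by_cases hx : x = 2 * n
            · exact Or.inl hx
            · refine Or.inr ⟨⟨?_, hx, hxW⟩, hx3⟩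
              intro he
              rw [he, he2pos] at hx3
              exact absurd hx3 (by norm_num)
        · rw [hD2]
          exact union_union_singleton _
  · rw [Set.disjoint_left]
    rintro θ ⟨σ1, hσ1, rfl⟩ ⟨σ2, hσ2, heq⟩
    have hmem : (2 * n, 2 * n + 2) ∈ σ1 ∪ {(2 * n, 2 * n + 1)} := by
      rw [heq]
      exact Finset.mem_union_right _ (Finset.mem_singleton_self _)
    rcases Finset.mem_union.mp hmem with hm | hm
    · obtain ⟨τ, hτpp, hτfst, rfl⟩ := hσ1
      rcases Finset.mem_union.mp hm with hD | hτ
      · have h2 : (2 * n : ℕ) ∈ θnc1.image Prod.fst :=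
          Finset.mem_image_of_mem _ (Finset.mem_of_mem_filter _ hD)
        rw [hleft1, Finset.mem_filter, Finset.mem_sdiff] at h2
        exact h2.1.2 (by simp)
      · have h2 : (2 * n : ℕ) ∈ τ.image Prod.fst :=
          Finset.mem_image_of_mem _ hτ
        rw [hτfst, Finset.mem_filter, hW1] at h2
        have := Finset.mem_of_mem_erase h2.1
        exact (Finset.notMem_erase _ _) this
    · rw [Finset.mem_singleton] at hm
      simp at hm
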